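/- arXiv:1401.1711 — 8 statements merged into one kernel-verified Lean document; each statement's English description precedes it below -/
import Mathlib

section
/- Let K > 0 and let C : ℝ × ℝ → ℝ be a nonnegative function satisfying λ·C(P₁,P₂) ≤ C(λP₁, λP₂) for all λ ∈ (0,1) and all P₁,P₂ > 0. Then for every ε > 0, the supremum of C(P₁,P₂)/(P₁ + K·P₂) over all P₁,P₂ > 0 equals the supremum of the same quantity over all P₁,P₂ ∈ (0,ε). Hence the optimization of rate per unit energy can be restricted to an arbitrarily small neighborhood of the origin. -/
/-! Scaling both powers by a small factor `l ∈ (0,1)` moves any point into the box `(0,ε)²`,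
and time sharing gives `C(lP)/(l·d) ≥ l·C(P)/(l·d) = C(P)/d`, so every value of the rate per unit
energy is dominated by one attained near the origin. -/

open Filter Topology

lemma exists_scale_mul_lt {ε : ℝ} (hε : 0 < ε) (x y : ℝ) :
    ∃ l : ℝ, 0 < l ∧ l < 1 ∧ l * x < ε ∧ l * y < ε := by
  have hsmall (z : ℝ) : ∀ᶠ l in 𝓝[>] (0 : ℝ), l * z < ε :=
    (((continuous_id.mul continuous_const).tendsto' 0 0 (zero_mul z)).mono_left
      nhdsWithin_le_nhds).eventually (gt_mem_nhds hε)
  have hlt_one : ∀ᶠ l in 𝓝[>] (0 : ℝ), l < 1 :=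
    (eventually_lt_nhds zero_lt_one).filter_mono nhdsWithin_le_nhds
  exact (eventually_mem_nhdsWithin.and (hlt_one.and ((hsmall x).and (hsmall y)))).exists

lemma div_le_div_mul_of_mul_le {a b l d : ℝ} (hl : 0 < l) (hd : 0 < d) (h : l * a ≤ b) :
    a / d ≤ b / (l * d) := by
  rw [← mul_div_mul_left a d hl.ne']
  exact div_le_div_of_nonneg_right h (by positivity)

theorem rate_per_unit_energy_sup_near_origin_general
    (K : ℝ) (hK : 0 < K) (C : ℝ × ℝ → ℝ)
    (hC_ts : ∀ l P₁ P₂ : ℝ, 0 < l → l < 1 → 0 < P₁ → 0 < P₂ →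
      l * C (P₁, P₂) ≤ C (l * P₁, l * P₂))
    (ε : ℝ) (hε : 0 < ε) :
    sSup {r : ℝ | ∃ P₁ P₂ : ℝ, 0 < P₁ ∧ 0 < P₂ ∧
        r = C (P₁, P₂) / (P₁ + K * P₂)} =
      sSup {r : ℝ | ∃ P₁ P₂ : ℝ, 0 < P₁ ∧ P₁ < ε ∧ 0 < P₂ ∧ P₂ < ε ∧
        r = C (P₁, P₂) / (P₁ + K * P₂)} := by
  apply csSup_eq_csSup_of_forall_exists_le
  · rintro r ⟨P₁, P₂, hP₁, hP₂, rfl⟩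
    obtain ⟨l, hl0, hl1, h₁, h₂⟩ := exists_scale_mul_lt hε P₁ P₂
    refine ⟨_, ⟨l * P₁, l * P₂, by positivity, h₁, by positivity, h₂, rfl⟩, ?_⟩
    rw [show l * P₁ + K * (l * P₂) = l * (P₁ + K * P₂) by ring]
    exact div_le_div_mul_of_mul_le hl0 (by positivity) (hC_ts l P₁ P₂ hl0 hl1 hP₁ hP₂)
  · rintro r ⟨P₁, P₂, hP₁, -, hP₂, -, rfl⟩
    exact ⟨_, ⟨P₁, P₂, hP₁, hP₂, rfl⟩, le_rfl⟩

/-- The optimization of rate per unit energy can be restricted to an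
arbitrarily small neighborhood of the origin. -/
theorem rate_per_unit_energy_sup_near_origin
    (K : ℝ) (hK : 0 < K) (C : ℝ × ℝ → ℝ)
    (hC_nonneg : ∀ P₁ P₂ : ℝ, 0 < P₁ → 0 < P₂ → 0 ≤ C (P₁, P₂))
    (hC_ts : ∀ l P₁ P₂ : ℝ, 0 < l → l < 1 → 0 < P₁ → 0 < P₂ →
      l * C (P₁, P₂) ≤ C (l * P₁, l * P₂))
    (ε : ℝ) (hε : 0 < ε) :
    sSup {r : ℝ | ∃ P₁ P₂ : ℝ, 0 < P₁ ∧ 0 < P₂ ∧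
        r = C (P₁, P₂) / (P₁ + K * P₂)} =
      sSup {r : ℝ | ∃ P₁ P₂ : ℝ, 0 < P₁ ∧ P₁ < ε ∧ 0 < P₂ ∧ P₂ < ε ∧
        r = C (P₁, P₂) / (P₁ + K * P₂)} :=
  rate_per_unit_energy_sup_near_origin_general K hK C hC_ts ε hε
end

section
/- Let K ≥ 1 be an integer and let g, h > 0 be reals. For all reals P₁, P₂ > 0 satisfying P₂·h < P₁·g < K²·P₂·h, one has log₂(1 + 2K·√(P₁·P₂·g·h)) / (P₁ + K·P₂) ≤ (2/ln 2) · min{ K·g, √(K·g·h), K·h }. -/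
/-!
With `S = √(P₁ P₂ g h)`, the inequality `log (1 + x) ≤ x` bounds the left-hand side by
`(2 / log 2) · K S / (P₁ + K P₂)`. In regime (iv) the geometric mean `S` of the received powers
`P₁ g` and `P₂ h` lies below both `P₁ g` and `K P₂ h`, which gives the first and the last entry of
the minimum; AM–GM in the form `√(P₁ · K P₂) ≤ (P₁ + K P₂) / 2` gives the middle one.
-/

open Real

lemma logb_two_one_add_le {x : ℝ} (hx : -1 < x) : logb 2 (1 + x) ≤ x / log 2 := by
  have hlog : log (1 + x) ≤ x := by linarith [log_le_sub_one_of_pos (by linarith : 0 < 1 + x)]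
  exact div_le_div_of_nonneg_right hlog (log_nonneg one_le_two)

lemma sqrt_mul_le_mul_of_le_sq_mul {a b t : ℝ} (hb : 0 ≤ b) (ht : 0 ≤ t) (hab : a ≤ t ^ 2 * b) :
    √(a * b) ≤ t * b := by
  rw [sqrt_le_left (by positivity)]
  nlinarith [mul_le_mul_of_nonneg_right hab hb]

theorem Real.sqrt_mul_le_half_add {x y : ℝ} (hxy : 0 ≤ x + y) : √(x * y) ≤ (x + y) / 2 := by
  rw [sqrt_le_left (by positivity)]
  nlinarith [sq_nonneg (x - y)]

section DiamondCuts

variable {K P₁ P₂ g h : ℝ}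

lemma mul_sqrt_le_source_gain (hK : 0 ≤ K) (hP₂ : 0 ≤ P₂) (hg : 0 ≤ g) (hh : 0 ≤ h)
    (h₁ : P₂ * h ≤ P₁ * g) : K * √(P₁ * P₂ * g * h) ≤ K * g * (P₁ + K * P₂) := by
  have hS : √(P₁ * P₂ * g * h) ≤ 1 * (P₁ * g) := by
    rw [show P₁ * P₂ * g * h = P₂ * h * (P₁ * g) by ring]
    exact sqrt_mul_le_mul_of_le_sq_mul ((mul_nonneg hP₂ hh).trans h₁) zero_le_one (by linarith)
  have hgain : 0 ≤ K * K * P₂ * g := by positivity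
  nlinarith [mul_le_mul_of_nonneg_left hS hK]

lemma mul_sqrt_le_relay_gain (hK : 0 ≤ K) (hP₁ : 0 ≤ P₁) (hP₂ : 0 ≤ P₂) (hh : 0 ≤ h)
    (h₂ : P₁ * g ≤ K ^ 2 * P₂ * h) : K * √(P₁ * P₂ * g * h) ≤ K * h * (P₁ + K * P₂) := by
  have hS : √(P₁ * P₂ * g * h) ≤ K * (P₂ * h) := by
    rw [show P₁ * P₂ * g * h = P₁ * g * (P₂ * h) by ring]
    exact sqrt_mul_le_mul_of_le_sq_mul (by positivity) hK (by linarith)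
  have hgain : 0 ≤ K * h * P₁ := by positivity
  nlinarith [mul_le_mul_of_nonneg_left hS hK]

lemma mul_sqrt_le_sqrt_gain (hK : 0 ≤ K) (hP₁ : 0 ≤ P₁) (hP₂ : 0 ≤ P₂) (hg : 0 ≤ g) (hh : 0 ≤ h) :
    K * √(P₁ * P₂ * g * h) ≤ √(K * g * h) * (P₁ + K * P₂) := by
  have hsplit : K * √(P₁ * P₂ * g * h) = √(P₁ * (K * P₂)) * √(K * g * h) :=
    calc K * √(P₁ * P₂ * g * h) = √(K ^ 2 * (P₁ * P₂ * g * h)) := by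
          rw [sqrt_mul (sq_nonneg K), sqrt_sq hK]
      _ = √(P₁ * (K * P₂) * (K * g * h)) := by ring_nf
      _ = √(P₁ * (K * P₂)) * √(K * g * h) := sqrt_mul' _ (by positivity)
  have hamgm := Real.sqrt_mul_le_half_add (x := P₁) (y := K * P₂) (by positivity)
  have hsqrt : 0 ≤ √(K * g * h) := sqrt_nonneg _
  have hsum : 0 ≤ P₁ + K * P₂ := by positivity
  rw [hsplit]
  nlinarith [mul_le_mul_of_nonneg_right hamgm hsqrt]

end DiamondCuts

theorem regime_iv_rate_per_unit_energy_bound_general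
    (K : ℕ) (g h : ℝ) (hg : 0 < g) (hh : 0 < h)
    (P₁ P₂ : ℝ) (hP₁ : 0 < P₁) (hP₂ : 0 < P₂)
    (h₁ : P₂ * h < P₁ * g) (h₂ : P₁ * g < (K : ℝ) ^ 2 * P₂ * h) :
    Real.logb 2 (1 + 2 * (K : ℝ) * Real.sqrt (P₁ * P₂ * g * h)) / (P₁ + (K : ℝ) * P₂) ≤
      (2 / Real.log 2) *
        min ((K : ℝ) * g) (min (Real.sqrt ((K : ℝ) * g * h)) ((K : ℝ) * h)) := by
  have hK : (0 : ℝ) ≤ K := K.cast_nonneg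
  have hD : 0 < P₁ + K * P₂ := by positivity
  have hcut : K * √(P₁ * P₂ * g * h) / (P₁ + K * P₂) ≤ min (K * g) (min √(K * g * h) (K * h)) := by
    refine le_min ?_ (le_min ?_ ?_) <;> rw [div_le_iff₀ hD]
    · exact mul_sqrt_le_source_gain hK hP₂.le hg.le hh.le h₁.le
    · exact mul_sqrt_le_sqrt_gain hK hP₁.le hP₂.le hg.le hh.le
    · exact mul_sqrt_le_relay_gain hK hP₁.le hP₂.le hh.le h₂.le
  calc logb 2 (1 + 2 * K * √(P₁ * P₂ * g * h)) / (P₁ + K * P₂)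
      ≤ 2 * K * √(P₁ * P₂ * g * h) / log 2 / (P₁ + K * P₂) := by
        gcongr
        exact logb_two_one_add_le (neg_one_lt_zero.trans_le (by positivity))
    _ = 2 / log 2 * (K * √(P₁ * P₂ * g * h) / (P₁ + K * P₂)) := by ring
    _ ≤ 2 / log 2 * min (K * g) (min √(K * g * h) (K * h)) :=
        mul_le_mul_of_nonneg_left hcut (div_nonneg zero_le_two (log_nonneg one_le_two))

/-- Rate per unit energy bound in the intermediate low-SNR regime (iv). -/
theorem regime_iv_rate_per_unit_energy_bound
    (K : ℕ) (hK : 1 ≤ K) (g h : ℝ) (hg : 0 < g) (hh : 0 < h)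
    (P₁ P₂ : ℝ) (hP₁ : 0 < P₁) (hP₂ : 0 < P₂)
    (h₁ : P₂ * h < P₁ * g) (h₂ : P₁ * g < (K : ℝ) ^ 2 * P₂ * h) :
    Real.logb 2 (1 + 2 * (K : ℝ) * Real.sqrt (P₁ * P₂ * g * h)) / (P₁ + (K : ℝ) * P₂) ≤
      (2 / Real.log 2) *
        min ((K : ℝ) * g) (min (Real.sqrt ((K : ℝ) * g * h)) ((K : ℝ) * h)) :=
  regime_iv_rate_per_unit_energy_bound_general K g h hg hh P₁ P₂ hP₁ hP₂ h₁ h₂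
end

section
/- Let K ≥ 1 be an integer and let g, h > 0 be reals. Then the supremum over all P₁, P₂ > 0 with P₁·g ≤ P₂·h of (1/2)·log₂(1 + K·P₁·g)/(P₁ + K·P₂) equals (1/(2·ln 2)) · K·g/(1 + K·g/h). The supremum is approached by setting P₂ = P₁·g/h and letting P₁ → 0, and is not exceeded since ln(1+x) ≤ x. -/
/-!
Since `log (1 + x) ≤ x` and the constraint `P₁ g ≤ P₂ h` forces `P₁ + K P₂ ≥ P₁ (1 + K g / h)`,
every rate is at most `K g / (2 log 2 (1 + K g / h))`. On the boundary `P₂ = P₁ g / h` the rate is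
`log (1 + K g P₁) / P₁` up to a constant factor, and this slope tends to `K g` as `P₁ → 0`, so the
bound is the supremum.
-/

open Real Filter Topology Set

lemma tendsto_log_one_add_mul_div (c : ℝ) :
    Tendsto (fun x : ℝ => log (1 + c * x) / x) (𝓝[≠] 0) (𝓝 c) := by
  have hderiv : HasDerivAt (fun x : ℝ => log (1 + c * x)) c 0 := by
    simpa using (((hasDerivAt_id (0 : ℝ)).const_mul c).const_add 1).log (by simp)
  refine hderiv.tendsto_slope_zero.congr fun x => ?_
  simp [div_eq_inv_mul]

section RatePerUnitEnergy

variable {K g h : ℝ}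

lemma rate_per_unit_energy_le (hK : 0 ≤ K) (hg : 0 < g) (hh : 0 < h) {P₁ P₂ : ℝ}
    (hP₁ : 0 < P₁) (hP : P₁ * g ≤ P₂ * h) :
    (1 / 2) * logb 2 (1 + K * P₁ * g) / (P₁ + K * P₂) ≤
      (1 / (2 * log 2)) * (K * g / (1 + K * g / h)) := by
  have hnum : logb 2 (1 + K * P₁ * g) ≤ K * g * P₁ / log 2 := by
    rw [logb]
    gcongr
    linarith [log_le_sub_one_of_pos (show 0 < 1 + K * P₁ * g by positivity)]
  have hden : P₁ * (1 + K * g / h) ≤ P₁ + K * P₂ := by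
    have : P₁ * g / h ≤ P₂ := (div_le_iff₀ hh).mpr hP
    calc P₁ * (1 + K * g / h) = P₁ + K * (P₁ * g / h) := by ring
      _ ≤ P₁ + K * P₂ := by gcongr
  calc (1 / 2) * logb 2 (1 + K * P₁ * g) / (P₁ + K * P₂)
      ≤ (1 / 2) * (K * g * P₁ / log 2) / (P₁ * (1 + K * g / h)) := by
        gcongr
    _ = (1 / (2 * log 2)) * (K * g / (1 + K * g / h)) := by
        field_simp

lemma tendsto_rate_per_unit_energy_of_eq :
    Tendsto (fun P₁ : ℝ => (1 / 2) * logb 2 (1 + K * P₁ * g) / (P₁ + K * (P₁ * g / h)))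
      (𝓝[≠] 0) (𝓝 ((1 / (2 * log 2)) * (K * g / (1 + K * g / h)))) := by
  have hslope := ((tendsto_log_one_add_mul_div (K * g)).div_const (1 + K * g / h)).const_mul
    (1 / (2 * log 2))
  refine hslope.congr' ?_
  filter_upwards [self_mem_nhdsWithin] with P₁ (hP₁ : P₁ ≠ 0)
  rw [logb]
  field_simp

end RatePerUnitEnergy

theorem regime_ii_rate_per_unit_energy_sup_general
    (K : ℕ) (g h : ℝ) (hg : 0 < g) (hh : 0 < h) :
    sSup {r : ℝ | ∃ P₁ P₂ : ℝ, 0 < P₁ ∧ 0 < P₂ ∧ P₁ * g ≤ P₂ * h ∧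
        r = (1 / 2) * Real.logb 2 (1 + (K : ℝ) * P₁ * g) / (P₁ + (K : ℝ) * P₂)} =
      (1 / (2 * Real.log 2)) * ((K : ℝ) * g / (1 + (K : ℝ) * g / h)) := by
  set S := {r : ℝ | ∃ P₁ P₂ : ℝ, 0 < P₁ ∧ 0 < P₂ ∧ P₁ * g ≤ P₂ * h ∧
        r = (1 / 2) * Real.logb 2 (1 + (K : ℝ) * P₁ * g) / (P₁ + (K : ℝ) * P₂)}
  have hboundary : ∀ᶠ P₁ in 𝓝[>] 0,
      (1 / 2) * logb 2 (1 + K * P₁ * g) / (P₁ + K * (P₁ * g / h)) ∈ S := by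
    filter_upwards [self_mem_nhdsWithin] with P₁ (hP₁ : 0 < P₁)
    exact ⟨P₁, P₁ * g / h, hP₁, by positivity, (div_mul_cancel₀ _ hh.ne').ge, rfl⟩
  refine (isLUB_of_mem_closure ?_ ?_).csSup_eq (hboundary.exists.elim fun _ hr => ⟨_, hr⟩)
  · rintro r ⟨P₁, P₂, hP₁, -, hP, rfl⟩
    exact rate_per_unit_energy_le K.cast_nonneg hg hh hP₁ hP
  · exact mem_closure_of_tendsto
      (tendsto_rate_per_unit_energy_of_eq.mono_left (nhdsGT_le_nhdsNE 0))
      hboundary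

/-- The supremum of the regime-(ii) rate per unit energy over all admissible
powers equals (1/(2 ln 2)) · Kg/(1 + Kg/h). -/
theorem regime_ii_rate_per_unit_energy_sup
    (K : ℕ) (hK : 1 ≤ K) (g h : ℝ) (hg : 0 < g) (hh : 0 < h) :
    sSup {r : ℝ | ∃ P₁ P₂ : ℝ, 0 < P₁ ∧ 0 < P₂ ∧ P₁ * g ≤ P₂ * h ∧
        r = (1 / 2) * Real.logb 2 (1 + (K : ℝ) * P₁ * g) / (P₁ + (K : ℝ) * P₂)} =
      (1 / (2 * Real.log 2)) * ((K : ℝ) * g / (1 + (K : ℝ) * g / h)) :=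
  regime_ii_rate_per_unit_energy_sup_general K g h hg hh
end

section
/- Let K ≥ 1 be an integer and let g, h > 0 be reals. For all reals P₁, P₂ > 0 satisfying P₁·g ≥ K²·P₂·h, one has (1/2)·log₂(1 + K²·P₂·h) / (P₁ + K·P₂) ≤ (2/ln 2) · min{ K·g, √(K·g·h), K·h }. -/
/-! The capacity term is at most linear in the SNR, `log₂ (1 + x) ≤ x / ln 2`, so the rate per
unit energy is at most `(K² P₂ h / (P₁ + K P₂)) / (2 ln 2)`. The multiple-access condition
`K² P₂ h ≤ P₁ g` bounds this ratio by `g`, dropping `P₁` bounds it by `K h`, and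
`min g (K h)` is below each of `K g`, `K h` and the geometric mean `√(K g h)`. -/

open Real

lemma Real.logb_one_add_le_div_log {b x : ℝ} (hb : 1 < b) (hx : -1 < x) :
    logb b (1 + x) ≤ x / log b := by
  rw [logb]
  gcongr
  · exact (log_pos hb).le
  · linarith [log_le_sub_one_of_pos (show 0 < 1 + x by linarith)]

lemma min_le_sqrt_mul (a b : ℝ) : min a b ≤ √(a * b) := by
  rcases le_or_gt (min a b) 0 with hmin | hmin
  · exact hmin.trans (sqrt_nonneg _)
  · have ha : 0 < a := hmin.trans_le (min_le_left a b)
    have hb : 0 < b := hmin.trans_le (min_le_right a b)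
    rw [le_sqrt hmin.le (mul_pos ha hb).le, sq]
    exact mul_le_mul (min_le_left a b) (min_le_right a b) hmin.le ha.le

lemma sq_mul_div_add_le_min {K g h P₁ P₂ : ℝ} (hK : 0 ≤ K) (hh : 0 ≤ h)
    (hP₁ : 0 < P₁) (hP₂ : 0 ≤ P₂) (hreg : K ^ 2 * P₂ * h ≤ P₁ * g) :
    K ^ 2 * P₂ * h / (P₁ + K * P₂) ≤ min g (K * h) := by
  have hden : 0 < P₁ + K * P₂ := by positivity
  rw [le_min_iff, div_le_iff₀ hden, div_le_iff₀ hden]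
  have hg : 0 ≤ g := nonneg_of_mul_nonneg_right (hreg.trans' (by positivity)) hP₁
  constructor
  · nlinarith [mul_nonneg hg (mul_nonneg hK hP₂)]
  · nlinarith [mul_nonneg (mul_nonneg hK hh) hP₁.le]

lemma min_le_min_mul_sqrt_mul {K g h : ℝ} (hK : 1 ≤ K) (hg : 0 ≤ g) :
    min g (K * h) ≤ min (K * g) (min √(K * g * h) (K * h)) := by
  refine le_min ((min_le_left _ _).trans (le_mul_of_one_le_left hg hK))
    (le_min ?_ (min_le_right _ _))
  calc min g (K * h) ≤ √(g * (K * h)) := min_le_sqrt_mul _ _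
    _ = √(K * g * h) := by ring_nf

/-- Rate per unit energy bound in the low-SNR regime (v) (multiple-access cut binding). -/
theorem regime_v_rate_per_unit_energy_bound
    (K : ℕ) (hK : 1 ≤ K) (g h : ℝ) (hg : 0 < g) (hh : 0 < h)
    (P₁ P₂ : ℝ) (hP₁ : 0 < P₁) (hP₂ : 0 < P₂)
    (hreg : P₁ * g ≥ (K : ℝ) ^ 2 * P₂ * h) :
    (1 / 2) * Real.logb 2 (1 + (K : ℝ) ^ 2 * P₂ * h) / (P₁ + (K : ℝ) * P₂) ≤
      (2 / Real.log 2) *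
        min ((K : ℝ) * g) (min (Real.sqrt ((K : ℝ) * g * h)) ((K : ℝ) * h)) := by
  have hK' : (1 : ℝ) ≤ K := by exact_mod_cast hK
  set x : ℝ := (K : ℝ) ^ 2 * P₂ * h
  have hlog2 : 0 < log 2 := log_pos one_lt_two
  have hlogb : logb 2 (1 + x) ≤ x / log 2 :=
    logb_one_add_le_div_log one_lt_two (by linarith [show 0 ≤ x by positivity])
  calc (1 / 2) * logb 2 (1 + x) / (P₁ + K * P₂)
      ≤ (1 / 2) * (x / log 2) / (P₁ + K * P₂) := by gcongr
    _ = (1 / (2 * log 2)) * (x / (P₁ + K * P₂)) := by ring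
    _ ≤ (1 / (2 * log 2)) * min g (K * h) := by
        gcongr
        exact sq_mul_div_add_le_min (by positivity) hh.le hP₁ hP₂.le hreg
    _ ≤ (2 / log 2) * min g (K * h) := by gcongr <;> linarith
    _ ≤ (2 / log 2) * min (K * g) (min √(K * g * h) (K * h)) :=
        mul_le_mul_of_nonneg_left (min_le_min_mul_sqrt_mul hK' hg.le) (by positivity)
end

section
/- Let K ≥ 1 be an integer and let g, h, μ > 0 be reals with h < g/K. With the choices P₁ = 1/(μ·g) and P₂ = 1/(μ·K²·h), one has K²·μ²·g·h·P₁·P₂/(1 + μ·g·P₁ + K·μ·h·P₂) = 1/(2 + 1/K), and (1/2)·log₂(1 + 1/(2 + 1/K)) / (P₁ + K·P₂) ≥ (μ·log₂(4/3)/4) · K·h. -/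
/-! With these powers the three terms of the SNR bound collapse to `1`, `1` and `1/K`, so the SNR
is `1/(2 + 1/K) ≥ 1/3`. Since `K h < g`, the total energy `1/(μg) + 1/(μKh)` is at most
`2/(μKh)`, and the rate per unit energy is at least `log₂(4/3)/2 · μKh/2`. -/

open Real

theorem snr_lb_eq_of_powers {𝕜 : Type*} [Field 𝕜] {K g h μ : 𝕜}
    (hK : K ≠ 0) (hg : g ≠ 0) (hh : h ≠ 0) (hμ : μ ≠ 0) :
    K ^ 2 * μ ^ 2 * g * h * (1 / (μ * g)) * (1 / (μ * K ^ 2 * h)) /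
        (1 + μ * g * (1 / (μ * g)) + K * μ * h * (1 / (μ * K ^ 2 * h))) = 1 / (2 + 1 / K) := by
  have hsource : μ * g * (1 / (μ * g)) = 1 := by field_simp
  have hrelay : K * μ * h * (1 / (μ * K ^ 2 * h)) = 1 / K := by field_simp
  have hsignal : K ^ 2 * μ ^ 2 * g * h * (1 / (μ * g)) * (1 / (μ * K ^ 2 * h)) = 1 := by
    field_simp
  rw [hsource, hrelay, hsignal, one_add_one_eq_two]

theorem logb_four_thirds_le {K : ℝ} (hK : 1 ≤ K) :
    logb 2 (4 / 3) ≤ logb 2 (1 + 1 / (2 + 1 / K)) := by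
  have hsnr : 1 / 3 ≤ 1 / (2 + 1 / K) := by
    gcongr
    linarith [(div_le_one (by positivity : (0 : ℝ) < K)).2 hK]
  exact logb_le_logb_of_le one_lt_two (by norm_num) (by linarith)

theorem total_energy_le_of_mul_le {K g h μ : ℝ} (hK : 0 < K) (hh : 0 < h) (hμ : 0 < μ)
    (hKg : K * h ≤ g) :
    1 / (μ * g) + K * (1 / (μ * K ^ 2 * h)) ≤ 2 / (μ * K * h) := by
  have hrelay : K * (1 / (μ * K ^ 2 * h)) = 1 / (μ * K * h) := by field_simp
  have hsource : 1 / (μ * g) ≤ 1 / (μ * K * h) := by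
    rw [mul_assoc]
    gcongr
  rw [hrelay, ← one_add_one_eq_two, add_div]
  gcongr

/-- Achieved rate per unit energy in the regime h < g/K with the power choices
P₁ = 1/(μg), P₂ = 1/(μK²h). -/
theorem achievable_rate_regime_h_lt_g_div_K
    (K : ℕ) (hK : 1 ≤ K) (g h μ : ℝ) (hg : 0 < g) (hh : 0 < h) (hμ : 0 < μ)
    (hreg : h < g / (K : ℝ))
    (P₁ P₂ : ℝ) (hP₁ : P₁ = 1 / (μ * g)) (hP₂ : P₂ = 1 / (μ * (K : ℝ) ^ 2 * h)) :
    (K : ℝ) ^ 2 * μ ^ 2 * g * h * P₁ * P₂ /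
        (1 + μ * g * P₁ + (K : ℝ) * μ * h * P₂) = 1 / (2 + 1 / (K : ℝ)) ∧
    (1 / 2) * Real.logb 2 (1 + 1 / (2 + 1 / (K : ℝ))) / (P₁ + (K : ℝ) * P₂) ≥
      μ * Real.logb 2 (4 / 3) / 4 * ((K : ℝ) * h) := by
  have hK₁ : (1 : ℝ) ≤ K := by exact_mod_cast hK
  have hK₀ : (0 : ℝ) < K := by linarith
  subst hP₁ hP₂
  refine ⟨snr_lb_eq_of_powers hK₀.ne' hg.ne' hh.ne' hμ.ne', ?_⟩
  have hKg : K * h ≤ g := (lt_div_iff₀' hK₀ |>.1 hreg).le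
  have hlog := logb_four_thirds_le hK₁
  have hlog₀ : 0 ≤ logb 2 (1 + 1 / (2 + 1 / (K : ℝ))) :=
    (logb_pos one_lt_two (by norm_num)).le.trans hlog
  calc μ * logb 2 (4 / 3) / 4 * (K * h)
      ≤ μ * logb 2 (1 + 1 / (2 + 1 / (K : ℝ))) / 4 * (K * h) := by gcongr
    _ = 1 / 2 * logb 2 (1 + 1 / (2 + 1 / (K : ℝ))) / (2 / (μ * K * h)) := by
      field_simp
      ring
    _ ≤ _ := div_le_div_of_nonneg_left (by positivity) (by positivity)
      (total_energy_le_of_mul_le hK₀ hh hμ hKg)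
end

section
/- Let K ≥ 1 be an integer and let g, h, μ > 0 be reals with g/K ≤ h < K·g. With the choices P₁ = 1/(μ·√(K·g·h)) and P₂ = 1/(μ·√(K³·g·h)), one has P₁ + K·P₂ = 2/(μ·√(K·g·h)), K²·μ²·g·h·P₁·P₂/(1 + μ·g·P₁ + K·μ·h·P₂) = 1/(1 + √(g/(K·h)) + √(h/(K·g))) ≥ 1/3, and (1/2)·log₂(1 + 1/(1 + √(g/(K·h)) + √(h/(K·g)))) / (P₁ + K·P₂) ≥ (μ·log₂(4/3)/4) · √(K·g·h). -/
/-!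
The choice of powers makes `μ P₁ = K μ P₂ = 1 / √(K g h)`, so the numerator of `SNR_lb` is
exactly `1` and its two denominator terms become `√(g / (K h))` and `√(h / (K g))`. In the
intermediate regime both are at most `1`, whence `SNR_lb ≥ 1/3`; the energy spent is
`2 / (μ √(K g h))`, and monotonicity of `log₂` gives the rate bound.
-/

open Real

lemma sqrt_div_mul_eq_div_sqrt {a b c : ℝ} (ha : 0 < a) :
    √(a / (c * b)) = a / √(c * a * b) := by
  calc √(a / (c * b)) = √(a ^ 2 / (c * a * b)) := by
        rw [sq, show c * a * b = a * (c * b) by ring, mul_div_mul_left _ _ ha.ne']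
    _ = a / √(c * a * b) := by rw [sqrt_div (sq_nonneg a), sqrt_sq ha.le]

lemma sqrt_pow_three_mul_mul {K g h : ℝ} (hK : 0 ≤ K) :
    √(K ^ 3 * g * h) = K * √(K * g * h) := by
  rw [show K ^ 3 * g * h = K ^ 2 * (K * g * h) by ring, sqrt_mul (sq_nonneg K), sqrt_sq hK]

lemma snr_eq_of_mul_power_eq {K g h μ P₁ P₂ s : ℝ} (hs : s ≠ 0) (hs2 : s ^ 2 = K * g * h)
    (hP₁ : μ * P₁ = 1 / s) (hP₂ : K * μ * P₂ = 1 / s) :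
    K ^ 2 * μ ^ 2 * g * h * P₁ * P₂ / (1 + μ * g * P₁ + K * μ * h * P₂) =
      1 / (1 + g / s + h / s) := by
  have hnum : K ^ 2 * μ ^ 2 * g * h * P₁ * P₂ = 1 :=
    calc K ^ 2 * μ ^ 2 * g * h * P₁ * P₂ = (K * g * h) * (μ * P₁) * (K * μ * P₂) := by ring
      _ = 1 := by rw [hP₁, hP₂, ← hs2]; field_simp
  have hden : 1 + μ * g * P₁ + K * μ * h * P₂ = 1 + g / s + h / s := by
    linear_combination g * hP₁ + h * hP₂
  rw [hnum, hden]

lemma one_third_le_one_div_one_add_add {x y : ℝ} (hx₀ : 0 ≤ x) (hy₀ : 0 ≤ y)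
    (hx : x ≤ 1) (hy : y ≤ 1) : 1 / 3 ≤ 1 / (1 + x + y) :=
  one_div_le_one_div_of_le (by positivity) (by linarith)

lemma rate_ge_of_one_third_le_snr {μ s r : ℝ} (hμ : 0 < μ) (hs : 0 < s) (hr : 1 / 3 ≤ r) :
    μ * logb 2 (4 / 3) / 4 * s ≤ 1 / 2 * logb 2 (1 + r) / (2 / (μ * s)) := by
  have hlog : logb 2 (4 / 3) ≤ logb 2 (1 + r) :=
    logb_le_logb_of_le one_lt_two (by norm_num) (by linarith)
  calc μ * logb 2 (4 / 3) / 4 * s ≤ μ * logb 2 (1 + r) / 4 * s := by gcongr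
    _ = 1 / 2 * logb 2 (1 + r) / (2 / (μ * s)) := by field_simp; ring

/-- Achieved rate per unit energy in the intermediate regime g/K ≤ h < Kg with
the power choices P₁ = 1/(μ√(Kgh)), P₂ = 1/(μ√(K³gh)). -/
theorem achievable_rate_intermediate_regime
    (K : ℕ) (hK : 1 ≤ K) (g h μ : ℝ) (hg : 0 < g) (hh : 0 < h) (hμ : 0 < μ)
    (hreg₁ : g / (K : ℝ) ≤ h) (hreg₂ : h < (K : ℝ) * g)
    (P₁ P₂ : ℝ) (hP₁ : P₁ = 1 / (μ * Real.sqrt ((K : ℝ) * g * h)))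
    (hP₂ : P₂ = 1 / (μ * Real.sqrt ((K : ℝ) ^ 3 * g * h))) :
    P₁ + (K : ℝ) * P₂ = 2 / (μ * Real.sqrt ((K : ℝ) * g * h)) ∧
    (K : ℝ) ^ 2 * μ ^ 2 * g * h * P₁ * P₂ /
        (1 + μ * g * P₁ + (K : ℝ) * μ * h * P₂) =
      1 / (1 + Real.sqrt (g / ((K : ℝ) * h)) + Real.sqrt (h / ((K : ℝ) * g))) ∧
    1 / (1 + Real.sqrt (g / ((K : ℝ) * h)) + Real.sqrt (h / ((K : ℝ) * g))) ≥ 1 / 3 ∧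
    (1 / 2) * Real.logb 2
        (1 + 1 / (1 + Real.sqrt (g / ((K : ℝ) * h)) + Real.sqrt (h / ((K : ℝ) * g)))) /
        (P₁ + (K : ℝ) * P₂) ≥
      μ * Real.logb 2 (4 / 3) / 4 * Real.sqrt ((K : ℝ) * g * h) := by
  have hK₀ : (0 : ℝ) < K := by exact_mod_cast hK
  set s := √((K : ℝ) * g * h) with hs_def
  have hs : 0 < s := sqrt_pos.2 (by positivity)
  rw [sqrt_pow_three_mul_mul hK₀.le, ← hs_def] at hP₂
  have hsum : P₁ + K * P₂ = 2 / (μ * s) := by rw [hP₁, hP₂]; field_simp; ring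
  have hg_le : √(g / (K * h)) ≤ 1 :=
    sqrt_le_one.2 (div_le_one_of_le₀ (by linarith [(div_le_iff₀ hK₀).1 hreg₁]) (by positivity))
  have hh_le : √(h / (K * g)) ≤ 1 :=
    sqrt_le_one.2 (div_le_one_of_le₀ hreg₂.le (by positivity))
  have hthird := one_third_le_one_div_one_add_add (sqrt_nonneg _) (sqrt_nonneg _) hg_le hh_le
  refine ⟨hsum, ?_, hthird, ?_⟩
  · rw [sqrt_div_mul_eq_div_sqrt hg, sqrt_div_mul_eq_div_sqrt hh, mul_right_comm (K : ℝ) h g, ← hs_def]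
    exact snr_eq_of_mul_power_eq hs.ne' (sq_sqrt (by positivity))
      (by rw [hP₁]; field_simp) (by rw [hP₂]; field_simp)
  · rw [hsum]
    exact rate_ge_of_one_third_le_snr hμ hs hthird
end

section
/- Let K ≥ 1 be an integer and let g, h, μ > 0 be reals with h ≥ K·g. With the choices P₁ = 1/(μ·K·g) and P₂ = 1/(μ·K·h), one has K²·μ²·g·h·P₁·P₂/(1 + μ·g·P₁ + K·μ·h·P₂) = 1/(2 + 1/K), and (1/2)·log₂(1 + 1/(2 + 1/K)) / (P₁ + K·P₂) ≥ (μ·log₂(4/3)/4) · K·g. -/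
/-! With these powers every term of the SNR expression collapses: the numerator is `1` and the
denominator is `1 + 1/K + 1`. Since `K ≥ 1`, the SNR is at least `1/3`, so the rate is at least
`½ log₂(4/3)`, while `h ≥ Kg` makes the relays' total power `K P₂ = 1/(μh)` at most the source
power `P₁ = 1/(μKg)`, so the energy is at most `2/(μKg)`. -/

open Real

lemma snr_lb_of_inverse_powers {𝕜 : Type*} [Field 𝕜] {K g h μ : 𝕜}
    (hK : K ≠ 0) (hg : g ≠ 0) (hh : h ≠ 0) (hμ : μ ≠ 0) :
    K ^ 2 * μ ^ 2 * g * h * (1 / (μ * K * g)) * (1 / (μ * K * h)) /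
        (1 + μ * g * (1 / (μ * K * g)) + K * μ * h * (1 / (μ * K * h))) = 1 / (2 + 1 / K) := by
  have hnum : K ^ 2 * μ ^ 2 * g * h * (1 / (μ * K * g)) * (1 / (μ * K * h)) = 1 := by
    field_simp
  have hden : 1 + μ * g * (1 / (μ * K * g)) + K * μ * h * (1 / (μ * K * h)) = 2 + 1 / K := by
    field_simp
    ring
  rw [hnum, hden]

lemma four_thirds_le_one_add_inv_two_add_inv {K : ℝ} (hK : 1 ≤ K) :
    4 / 3 ≤ 1 + 1 / (2 + 1 / K) := by
  have hinv : 1 / K ≤ 1 := by rwa [div_le_one (by linarith)]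
  have : 1 / 3 ≤ 1 / (2 + 1 / K) :=
    one_div_le_one_div_of_le (by positivity) (by linarith)
  linarith

lemma inverse_powers_sum_le {K g h μ : ℝ} (hK : 0 < K) (hg : 0 < g) (hμ : 0 < μ)
    (hreg : K * g ≤ h) :
    1 / (μ * K * g) + K * (1 / (μ * K * h)) ≤ 2 / (μ * K * g) := by
  have hrelays : K * (1 / (μ * K * h)) = 1 / (μ * h) := by
    field_simp [(lt_of_lt_of_le (by positivity) hreg : 0 < h).ne']
  have hle : 1 / (μ * h) ≤ 1 / (μ * K * g) :=
    one_div_le_one_div_of_le (by positivity) (by rw [mul_assoc]; gcongr)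
  rw [hrelays]
  linarith [add_div 1 1 (μ * K * g)]

theorem achievable_rate_regime_h_ge_Kg_general
    (K : ℕ) (hK : 1 ≤ K) (g h μ : ℝ) (hg : 0 < g) (hμ : 0 < μ)
    (hreg : h ≥ (K : ℝ) * g)
    (P₁ P₂ : ℝ) (hP₁ : P₁ = 1 / (μ * (K : ℝ) * g)) (hP₂ : P₂ = 1 / (μ * (K : ℝ) * h)) :
    (K : ℝ) ^ 2 * μ ^ 2 * g * h * P₁ * P₂ /
        (1 + μ * g * P₁ + (K : ℝ) * μ * h * P₂) = 1 / (2 + 1 / (K : ℝ)) ∧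
    (1 / 2) * Real.logb 2 (1 + 1 / (2 + 1 / (K : ℝ))) / (P₁ + (K : ℝ) * P₂) ≥
      μ * Real.logb 2 (4 / 3) / 4 * ((K : ℝ) * g) := by
  have hK1 : (1 : ℝ) ≤ K := by exact_mod_cast hK
  have hKpos : (0 : ℝ) < K := by linarith
  have hh : 0 < h := lt_of_lt_of_le (by positivity) hreg
  subst hP₁ hP₂
  refine ⟨snr_lb_of_inverse_powers hKpos.ne' hg.ne' hh.ne' hμ.ne', ?_⟩
  have hlog : logb 2 (4 / 3) ≤ logb 2 (1 + 1 / (2 + 1 / (K : ℝ))) :=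
    logb_le_logb_of_le (by norm_num) (by norm_num) (four_thirds_le_one_add_inv_two_add_inv hK1)
  have hlog0 : 0 ≤ logb 2 (4 / 3) := logb_nonneg (by norm_num) (by norm_num)
  calc μ * logb 2 (4 / 3) / 4 * (K * g) = 1 / 2 * logb 2 (4 / 3) / (2 / (μ * K * g)) := by
        field_simp
        ring
    _ ≤ 1 / 2 * logb 2 (1 + 1 / (2 + 1 / (K : ℝ))) / (1 / (μ * K * g) + K * (1 / (μ * K * h))) :=
        div_le_div₀ (by linarith) (by linarith) (by positivity)
          (inverse_powers_sum_le hKpos hg hμ hreg)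

/-- Achieved rate per unit energy in the regime h ≥ Kg with the power choices
P₁ = 1/(μKg), P₂ = 1/(μKh). -/
theorem achievable_rate_regime_h_ge_Kg
    (K : ℕ) (hK : 1 ≤ K) (g h μ : ℝ) (hg : 0 < g) (hh : 0 < h) (hμ : 0 < μ)
    (hreg : h ≥ (K : ℝ) * g)
    (P₁ P₂ : ℝ) (hP₁ : P₁ = 1 / (μ * (K : ℝ) * g)) (hP₂ : P₂ = 1 / (μ * (K : ℝ) * h)) :
    (K : ℝ) ^ 2 * μ ^ 2 * g * h * P₁ * P₂ /
        (1 + μ * g * P₁ + (K : ℝ) * μ * h * P₂) = 1 / (2 + 1 / (K : ℝ)) ∧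
    (1 / 2) * Real.logb 2 (1 + 1 / (2 + 1 / (K : ℝ))) / (P₁ + (K : ℝ) * P₂) ≥
      μ * Real.logb 2 (4 / 3) / 4 * ((K : ℝ) * g) :=
  achievable_rate_regime_h_ge_Kg_general K hK g h μ hg hμ hreg P₁ P₂ hP₁ hP₂
end

section
/- Let K ≥ 1 be an integer and let g, h, μ > 0 be reals. Then there exist P₁, P₂ > 0 such that (1/2)·log₂(1 + K²·μ²·g·h·P₁·P₂/(1 + μ·g·P₁ + K·μ·h·P₂)) / (P₁ + K·P₂) ≥ (μ·log₂(4/3)/4) · min{ K·g, √(K·g·h), K·h }. -/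
/-!
Let `m = min{Kg, √(Kgh), Kh}` and spend the powers `P₁ = 1/(μm)`, `P₂ = 1/(Kμm)`, so that the
total energy is `2/(μm)`. The effective SNR then equals `Kgh / (m(m + g + h))`, and each of
`m²`, `mg`, `mh` is at most `Kgh`, so the SNR is at least `1/3`. Hence the rate per unit energy
is at least `(1/2)·log₂(4/3)·μm/2`.
-/

noncomputable def diamondSNR (K g h μ P₁ P₂ : ℝ) : ℝ :=
  K ^ 2 * μ ^ 2 * g * h * P₁ * P₂ / (1 + μ * g * P₁ + K * μ * h * P₂)

section

variable {K g h μ m : ℝ}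

theorem diamondSNR_balanced (hK : 0 < K) (hg : 0 < g) (hh : 0 < h) (hμ : 0 < μ) (hm : 0 < m) :
    diamondSNR K g h μ (1 / (μ * m)) (1 / (K * μ * m)) = K * g * h / (m * (m + g + h)) := by
  unfold diamondSNR
  have : 0 < m + g + h := by positivity
  field_simp

theorem one_third_le_balanced_snr (hg : 0 < g) (hh : 0 < h) (hm : 0 < m)
    (hmg : m ≤ K * g) (hmh : m ≤ K * h) (hmgh : m ^ 2 ≤ K * g * h) :
    1 / 3 ≤ K * g * h / (m * (m + g + h)) := by
  rw [le_div_iff₀ (by positivity)]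
  nlinarith [mul_le_mul_of_nonneg_right hmg hh.le, mul_le_mul_of_nonneg_right hmh hg.le]

end

theorem le_of_le_min_sqrt {a b c m : ℝ} (hm : 0 < m) (hle : m ≤ min a (min (Real.sqrt c) b)) :
    m ≤ a ∧ m ^ 2 ≤ c ∧ m ≤ b := by
  simp only [le_min_iff] at hle
  exact ⟨hle.1, (Real.le_sqrt' hm).1 hle.2.1, hle.2.2⟩

/-- Algebraic core of the achievability result: there exist powers P₁, P₂ > 0
for which the rate per unit energy of the repetition-code relaying scheme is at
least (μ·log₂(4/3)/4)·min{Kg, √(Kgh), Kh}. -/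
theorem achievable_rate_per_unit_energy
    (K : ℕ) (hK : 1 ≤ K) (g h μ : ℝ) (hg : 0 < g) (hh : 0 < h) (hμ : 0 < μ) :
    ∃ P₁ P₂ : ℝ, 0 < P₁ ∧ 0 < P₂ ∧
      (1 / 2) * Real.logb 2
          (1 + (K : ℝ) ^ 2 * μ ^ 2 * g * h * P₁ * P₂ /
            (1 + μ * g * P₁ + (K : ℝ) * μ * h * P₂)) / (P₁ + (K : ℝ) * P₂) ≥
        μ * Real.logb 2 (4 / 3) / 4 *
          min ((K : ℝ) * g) (min (Real.sqrt ((K : ℝ) * g * h)) ((K : ℝ) * h)) := by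
  have hK0 : (0 : ℝ) < K := by exact_mod_cast hK
  set m := min ((K : ℝ) * g) (min (Real.sqrt ((K : ℝ) * g * h)) ((K : ℝ) * h))
  have hm : 0 < m := lt_min (by positivity) (lt_min (by positivity) (by positivity))
  obtain ⟨hmg, hmgh, hmh⟩ := le_of_le_min_sqrt hm le_rfl
  refine ⟨1 / (μ * m), 1 / (K * μ * m), by positivity, by positivity, ?_⟩
  have hsnr : 1 / 3 ≤ diamondSNR K g h μ (1 / (μ * m)) (1 / (K * μ * m)) :=
    diamondSNR_balanced hK0 hg hh hμ hm ▸ one_third_le_balanced_snr hg hh hm hmg hmh hmgh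
  have hlog : Real.logb 2 (4 / 3) ≤
      Real.logb 2 (1 + diamondSNR K g h μ (1 / (μ * m)) (1 / (K * μ * m))) :=
    Real.logb_le_logb_of_le one_lt_two (by norm_num) (by linarith)
  have henergy : 1 / (μ * m) + K * (1 / (K * μ * m)) = 2 / (μ * m) := by
    field_simp; ring
  rw [henergy, ge_iff_le]
  calc μ * Real.logb 2 (4 / 3) / 4 * m = 1 / 2 * Real.logb 2 (4 / 3) / (2 / (μ * m)) := by
        field_simp; ring
    _ ≤ _ := by gcongr 1 / 2 * ?_ / _; exact hlog
end
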